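/- Let X be uniformly distributed on {0,1}² and let F be a uniform balanced random predicate on {0,1}², independent of X. Then there exists a family {ρ_x}_{x∈{0,1}²} of density matrices on ℂ² (which can be taken to be rank-one projections onto the vertices of a regular tetrahedron in the Bloch sphere) such that d(F(X)|⟨ρ_X,F⟩) = 1/(2√3). -/

import Mathlib

open Finset ComplexOrder

/-- The distance of a distribution `P` on a finite set `Z` from the uniform
distribution: `d(P) = (1/2) ∑_z |P z - 1/|Z||`. -/
noncomputable def distUnif {Z : Type*} [Fintype Z] (P : Z → ℝ) : ℝ :=
  (1 / 2) * ∑ z, |P z - 1 / (Fintype.card Z : ℝ)|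

/-- For a joint distribution `P` on `W × Z` (given as `P : W → Z → ℝ`), the expected
distance of `Z` from uniform given `W`: `d(Z|W) = ∑_w P_W(w) · d(P_{Z|W=w})`. -/
noncomputable def dCond {W Z : Type*} [Fintype W] [Fintype Z] (P : W → Z → ℝ) : ℝ :=
  ∑ w, (∑ z, P w z) * distUnif (fun z => P w z / ∑ z', P w z')

/-- A POVM on `ℂ^d` with an arbitrary finite outcome set: a family `{E_w}` of positive
semidefinite `d×d` complex matrices summing to the identity. -/
structure POVM (d : ℕ) where
  ι : Type
  [fin : Fintype ι]
  E : ι → Matrix (Fin d) (Fin d) ℂ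
  psd : ∀ w, (E w).PosSemidef
  sum_eq : ∑ w, E w = 1

attribute [instance] POVM.fin

/-- Given `X` with distribution `PX` on `𝒳`, a family `{ρ_x}` of density matrices on
`ℂ^d`, and a function `g : 𝒳 → 𝒵`, the distance of `g(X)` from uniform given `ρ_X`:
the supremum over all POVMs `{E_w}` (with arbitrary finite outcome sets) of
`d(g(X)|W)`, where `W` is the measurement outcome, with joint distribution
`P_{X W}(x,w) = PX x · tr(E_w ρ_x)`. -/
noncomputable def dQuant {d : ℕ} {𝒳 𝒵 : Type} [Fintype 𝒳] [Fintype 𝒵] [DecidableEq 𝒵]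
    (PX : 𝒳 → ℝ) (ρ : 𝒳 → Matrix (Fin d) (Fin d) ℂ) (g : 𝒳 → 𝒵) : ℝ :=
  sSup {r : ℝ | ∃ M : POVM d,
    r = dCond (fun (w : M.ι) (z : 𝒵) =>
      ∑ x ∈ univ.filter (fun x => g x = z), PX x * ((M.E w) * ρ x).trace.re)}

/-- The balanced predicates on `{0,1}²` (predicates taking each of the two values on
exactly half of the domain); `{0,1}` is identified with `Bool`. -/
def Bal : Finset ((Bool × Bool) → Bool) :=
  univ.filter (fun f =>
    (univ.filter (fun x => f x = false)).card = (univ.filter (fun x => f x = true)).card)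

/-- The distribution of a uniform balanced random predicate on `{0,1}²`. -/
noncomputable def PF (f : (Bool × Bool) → Bool) : ℝ :=
  if f ∈ Bal then (Bal.card : ℝ)⁻¹ else 0

/-!
Take for `ρ_x` the pure qubit states whose Bloch vectors `n_x` are the vertices of a regular
tetrahedron. A balanced predicate `f` splits the vertices into two pairs, and
`Δ_f = ¼ (∑_{f x = 0} ρ_x - ∑_{f x = 1} ρ_x) = (2√3)⁻¹ (u · σ)` for a unit vector `u`.
For a binary predicate `d(f(X)|W) = ½ ∑_w |tr (E_w Δ_f)|`, and writing `u · σ = P - Q` with `P, Q`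
the complementary spectral projections, `|tr (E (P - Q))| ≤ tr E` with equality for `E ∈ {P, Q}`.
So measuring `u · σ` is optimal and `d(f(X)|⟨ρ_X, f⟩) = 1/(2√3)` for every balanced `f`.
-/

open Matrix Complex

lemma sum_mul_distUnif_div_sum {Z : Type*} [Fintype Z] {P : Z → ℝ} (hP : ∀ z, 0 ≤ P z) :
    (∑ z, P z) * distUnif (fun z => P z / ∑ z', P z')
      = 1 / 2 * ∑ z, |P z - (∑ z', P z') / Fintype.card Z| := by
  have hs : 0 ≤ ∑ z', P z' := sum_nonneg fun z _ => hP z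
  generalize hs_def : ∑ z', P z' = s at hs
  rcases hs.eq_or_lt with rfl | hs
  · have hP0 : ∀ z, P z = 0 := fun z =>
      (sum_eq_zero_iff_of_nonneg fun z _ => hP z).mp hs_def z (mem_univ z)
    simp [hP0]
  · rw [distUnif, mul_left_comm, mul_sum]
    congr 1
    refine sum_congr rfl fun z _ => ?_
    rw [← abs_of_pos hs, ← abs_mul, abs_of_pos hs]
    congr 1
    field_simp

lemma dCond_bool {W : Type*} [Fintype W] {P : W → Bool → ℝ} (hP : ∀ w z, 0 ≤ P w z) :
    dCond P = ∑ w, |P w false - P w true| / 2 := by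
  refine sum_congr rfl fun w _ => ?_
  rw [sum_mul_distUnif_div_sum (hP w), Fintype.sum_bool, Fintype.sum_bool, Fintype.card_bool]
  rw [show P w true - (P w true + P w false) / (2 : ℕ) = -((P w false - P w true) / 2) by
      push_cast; ring,
    show P w false - (P w true + P w false) / (2 : ℕ) = (P w false - P w true) / 2 by
      push_cast; ring, abs_neg, abs_div, abs_two]
  ring

namespace Matrix

open scoped MatrixOrder in
lemma PosSemidef.re_trace_mul_nonneg {n : Type*} [Fintype n] [DecidableEq n]
    {A B : Matrix n n ℂ} (hA : A.PosSemidef) (hB : B.PosSemidef) : 0 ≤ (A * B).trace.re := by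
  -- `tr (A B) = tr (√B A √B)` and `√B A √B` is positive semidefinite.
  have hcycle : (A * B).trace = (CFC.sqrt B * A * CFC.sqrt B).trace := by
    conv_lhs => rw [← CFC.sqrt_mul_sqrt_self B hB.nonneg]
    rw [← Matrix.mul_assoc, trace_mul_cycle]
  have hconj : (CFC.sqrt B * A * CFC.sqrt B).PosSemidef := by
    simpa [(CFC.sqrt_nonneg B).posSemidef.1.eq] using hA.conjTranspose_mul_mul_same (CFC.sqrt B)
  rw [hcycle]
  exact (Complex.nonneg_iff.mp hconj.trace_nonneg).1

lemma PosSemidef.abs_re_trace_mul_sub_le {n : Type*} [Fintype n] [DecidableEq n]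
    {E P Q : Matrix n n ℂ} (hE : E.PosSemidef) (hP : P.PosSemidef) (hQ : Q.PosSemidef)
    (hPQ : P + Q = 1) : |(E * (P - Q)).trace.re| ≤ E.trace.re := by
  have hsum : (E * P).trace.re + (E * Q).trace.re = E.trace.re := by
    rw [← add_re, ← trace_add, ← Matrix.mul_add, hPQ, Matrix.mul_one]
  rw [Matrix.mul_sub, trace_sub, sub_re, abs_le]
  constructor <;> linarith [hE.re_trace_mul_nonneg hP, hE.re_trace_mul_nonneg hQ]

lemma re_trace_mul_sum_smul {n ι : Type*} [Fintype n] (E : Matrix n n ℂ) (s : Finset ι)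
    (c : ι → ℝ) (A : ι → Matrix n n ℂ) :
    (E * ∑ i ∈ s, c i • A i).trace.re = ∑ i ∈ s, c i * (E * A i).trace.re := by
  simp only [Matrix.mul_sum, trace_sum, re_sum, Matrix.mul_smul, trace_smul, smul_re, smul_eq_mul]

end Matrix

namespace POVM

lemma sum_re_trace {d : ℕ} (M : POVM d) : ∑ w, (M.E w).trace.re = d := by
  rw [← re_sum, ← trace_sum, M.sum_eq, trace_one, Fintype.card_fin, natCast_re]

def ofPair {d : ℕ} {P Q : Matrix (Fin d) (Fin d) ℂ} (hP : P.PosSemidef) (hQ : Q.PosSemidef)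
    (hPQ : P + Q = 1) : POVM d where
  ι := Bool
  E b := if b then P else Q
  psd b := by cases b <;> assumption
  sum_eq := by simpa [add_comm] using hPQ

end POVM

section BinaryPredicate

variable {d : ℕ} {𝒳 : Type} [Fintype 𝒳] {PX : 𝒳 → ℝ} {ρ : 𝒳 → Matrix (Fin d) (Fin d) ℂ}
  {f : 𝒳 → Bool} {P Q : Matrix (Fin d) (Fin d) ℂ} {t : ℝ}

lemma dCond_measure_eq_of_sub_eq_smul (hPX : ∀ x, 0 ≤ PX x) (hρ : ∀ x, (ρ x).PosSemidef)
    (ht : 0 ≤ t)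
    (hΔ : ∑ x ∈ univ.filter (f · = false), PX x • ρ x
      - ∑ x ∈ univ.filter (f · = true), PX x • ρ x = t • (P - Q))
    (M : POVM d) :
    dCond (fun w z => ∑ x ∈ univ.filter (f · = z), PX x * (M.E w * ρ x).trace.re)
      = t / 2 * ∑ w, |(M.E w * (P - Q)).trace.re| := by
  rw [dCond_bool fun w z => sum_nonneg fun x _ =>
    mul_nonneg (hPX x) ((M.psd w).re_trace_mul_nonneg (hρ x)), mul_sum]
  refine sum_congr rfl fun w _ => ?_
  rw [← re_trace_mul_sum_smul, ← re_trace_mul_sum_smul, ← sub_re, ← trace_sub, ← Matrix.mul_sub,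
    hΔ, Matrix.mul_smul, trace_smul, smul_re, smul_eq_mul, abs_mul, abs_of_nonneg ht]
  ring

theorem dQuant_eq_of_sub_eq_smul (hPX : ∀ x, 0 ≤ PX x) (hρ : ∀ x, (ρ x).PosSemidef)
    (hP : P.PosSemidef) (hQ : Q.PosSemidef) (hPQ : P + Q = 1) (horth : P * Q = 0) (ht : 0 ≤ t)
    (hΔ : ∑ x ∈ univ.filter (f · = false), PX x • ρ x
      - ∑ x ∈ univ.filter (f · = true), PX x • ρ x = t • (P - Q)) :
    dQuant PX ρ f = t * d / 2 := by
  refine IsGreatest.csSup_eq ⟨⟨POVM.ofPair hP hQ hPQ, ?_⟩, ?_⟩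
  · have hQP : Q * P = 0 := by
      simpa [hP.1.eq, hQ.1.eq] using congrArg conjTranspose horth
    have hPP : P * (P - Q) = P := by
      simpa [Matrix.mul_add, Matrix.mul_sub, horth] using congrArg (P * ·) hPQ
    have hQQ : Q * (P - Q) = -Q := by
      simpa [Matrix.mul_add, Matrix.mul_sub, hQP] using congrArg (- Q * ·) hPQ
    have htrace : P.trace.re + Q.trace.re = d := by
      rw [← add_re, ← trace_add, hPQ, trace_one, Fintype.card_fin, natCast_re]
    rw [dCond_measure_eq_of_sub_eq_smul hPX hρ ht hΔ, ← htrace, eq_comm]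
    change t / 2 * ∑ w : Bool, |((if w then P else Q) * (P - Q)).trace.re| = _
    rw [Fintype.sum_bool, if_pos rfl, if_neg Bool.false_ne_true, hPP, hQQ, trace_neg, neg_re,
      abs_neg, abs_of_nonneg (Complex.nonneg_iff.mp hP.trace_nonneg).1,
      abs_of_nonneg (Complex.nonneg_iff.mp hQ.trace_nonneg).1]
    ring
  · rintro r ⟨M, rfl⟩
    rw [dCond_measure_eq_of_sub_eq_smul hPX hρ ht hΔ, ← M.sum_re_trace, mul_div_right_comm]
    gcongr with w
    exact (M.psd w).abs_re_trace_mul_sub_le hP hQ hPQ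

end BinaryPredicate

/-- `pauli v = v₀ σ_x + v₁ σ_y + v₂ σ_z`, so that `bloch v = (1 + v · σ) / 2` is the qubit state
with Bloch vector `v`. -/
noncomputable def pauli (v : Fin 3 → ℝ) : Matrix (Fin 2) (Fin 2) ℂ :=
  !![(v 2 : ℂ), v 0 - v 1 * I; v 0 + v 1 * I, -(v 2 : ℂ)]

noncomputable def bloch (v : Fin 3 → ℝ) : Matrix (Fin 2) (Fin 2) ℂ :=
  (2⁻¹ : ℂ) • (1 + pauli v)

lemma pauli_neg (v : Fin 3 → ℝ) : pauli (-v) = -pauli v := by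
  ext i j; fin_cases i <;> fin_cases j <;> simp [pauli] <;> ring

lemma pauli_isHermitian (v : Fin 3 → ℝ) : (pauli v).IsHermitian := by
  ext i j; fin_cases i <;> fin_cases j <;> simp [pauli, conjTranspose_apply, Complex.ext_iff]

lemma trace_pauli (v : Fin 3 → ℝ) : (pauli v).trace = 0 := by
  simp [pauli, trace_fin_two]

lemma pauli_mul_self {v : Fin 3 → ℝ} (hv : ∑ k, v k ^ 2 = 1) : pauli v * pauli v = 1 := by
  rw [Fin.sum_univ_three] at hv
  ext i j; fin_cases i <;> fin_cases j <;>
    simp [pauli, Complex.ext_iff] <;> constructor <;> first | ring1 | linear_combination hv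

lemma trace_bloch (v : Fin 3 → ℝ) : (bloch v).trace = 1 := by
  simp [bloch, trace_add, trace_pauli]

lemma bloch_add_bloch_neg (v : Fin 3 → ℝ) : bloch v + bloch (-v) = 1 := by
  rw [bloch, bloch, pauli_neg, ← smul_add]
  module

lemma bloch_sub_bloch_neg (v : Fin 3 → ℝ) : bloch v - bloch (-v) = pauli v := by
  rw [bloch, bloch, pauli_neg, ← smul_sub]
  module

lemma bloch_mul_self {v : Fin 3 → ℝ} (hv : ∑ k, v k ^ 2 = 1) : bloch v * bloch v = bloch v := by
  simp only [bloch, smul_mul_smul_comm, add_mul, mul_add, pauli_mul_self hv, mul_one, one_mul]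
  module

lemma bloch_posSemidef {v : Fin 3 → ℝ} (hv : ∑ k, v k ^ 2 = 1) : (bloch v).PosSemidef := by
  have hH : (bloch v).IsHermitian := by
    simp [bloch, IsHermitian, conjTranspose_smul, conjTranspose_add, (pauli_isHermitian v).eq]
  rw [← bloch_mul_self hv]
  nth_rewrite 1 [← hH.eq]
  exact posSemidef_conjTranspose_mul_self _

lemma bloch_mul_bloch_neg {v : Fin 3 → ℝ} (hv : ∑ k, v k ^ 2 = 1) :
    bloch v * bloch (-v) = 0 := by
  rw [← sub_eq_of_eq_add' (bloch_add_bloch_neg v).symm, mul_sub, mul_one, bloch_mul_self hv,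
    sub_self]

def boolSign (b : Bool) : ℝ := if b then -1 else 1

/-- The coordinates of the vertex `x` are the signs of the three nonconstant affine functions
`x₁, x₂, x₁ ⊕ x₂` on `{0,1}²`. The balanced predicates are exactly these and their negations,
so each of them singles out one coordinate axis. -/
noncomputable def tetrahedron (x : Bool × Bool) : Fin 3 → ℝ :=
  (√3)⁻¹ • ![boolSign x.1, boolSign x.2, boolSign (xor x.1 x.2)]

lemma sum_sq_tetrahedron (x : Bool × Bool) : ∑ k, tetrahedron x k ^ 2 = 1 := by
  have h3 : ((√3)⁻¹) ^ 2 = (3 : ℝ)⁻¹ := by rw [inv_pow, Real.sq_sqrt (by norm_num)]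
  rcases x with ⟨_ | _, _ | _⟩ <;>
    simp [Fin.sum_univ_three, tetrahedron, boolSign, mul_pow, h3] <;> norm_num

lemma mem_Bal_iff (f : Bool × Bool → Bool) :
    f ∈ Bal ↔ f = (·.1) ∨ f = (!·.1) ∨ f = (·.2) ∨ f = (!·.2) ∨ f = (fun x => xor x.1 x.2)
      ∨ f = (fun x => !xor x.1 x.2) := by
  revert f; decide

lemma exists_sub_eq_smul_pauli (f : Bool × Bool → Bool) (hf : f ∈ Bal) :
    ∃ u : Fin 3 → ℝ, ∑ k, u k ^ 2 = 1 ∧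
      ∑ x ∈ univ.filter (f · = false), (1 / 4 : ℝ) • bloch (tetrahedron x)
        - ∑ x ∈ univ.filter (f · = true), (1 / 4 : ℝ) • bloch (tetrahedron x)
        = (1 / (2 * √3)) • pauli u := by
  rcases (mem_Bal_iff f).mp hf with rfl | rfl | rfl | rfl | rfl | rfl
  on_goal 1 => refine ⟨![1, 0, 0], by simp [Fin.sum_univ_three], ?_⟩
  on_goal 2 => refine ⟨![-1, 0, 0], by simp [Fin.sum_univ_three], ?_⟩
  on_goal 3 => refine ⟨![0, 1, 0], by simp [Fin.sum_univ_three], ?_⟩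
  on_goal 4 => refine ⟨![0, -1, 0], by simp [Fin.sum_univ_three], ?_⟩
  on_goal 5 => refine ⟨![0, 0, 1], by simp [Fin.sum_univ_three], ?_⟩
  on_goal 6 => refine ⟨![0, 0, -1], by simp [Fin.sum_univ_three], ?_⟩
  all_goals
    simp only [sum_filter, Fintype.sum_prod_type, Fintype.sum_bool]
    ext i j
    fin_cases i <;> fin_cases j <;>
      simp [bloch, pauli, tetrahedron, boolSign, Complex.ext_iff] <;> ring

lemma sum_PF_mul_of_eqOn_Bal {g : (Bool × Bool → Bool) → ℝ} {c : ℝ} (hg : ∀ f ∈ Bal, g f = c) :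
    ∑ f, PF f * g f = c := by
  have hcard : (Bal.card : ℝ) ≠ 0 := Nat.cast_ne_zero.mpr (by decide)
  simp only [PF, ite_mul, zero_mul, ← sum_filter, filter_mem_eq_inter, univ_inter]
  rw [sum_congr rfl fun f hf => by rw [hg f hf], sum_const, nsmul_eq_mul, ← mul_assoc,
    mul_inv_cancel₀ hcard, one_mul]

/-- **Third part of Lemma `lem:compex`** (the quantum bound is attained): let `X` be
uniform on `{0,1}²` and `F` a uniform balanced random predicate on `{0,1}²` independent
of `X`. There exists a family `{ρ_x}` of density matrices on `ℂ²` such that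
`d(F(X)|⟨ρ_X,F⟩) = 1/(2√3)`. -/
theorem lemma_compex_quantum_attained :
    ∃ ρ : (Bool × Bool) → Matrix (Fin 2) (Fin 2) ℂ,
      (∀ x, (ρ x).PosSemidef) ∧ (∀ x, (ρ x).trace = 1) ∧
      ∑ f, PF f * dQuant (fun _ => (1 / 4 : ℝ)) ρ f = 1 / (2 * Real.sqrt 3) := by
  have hρ x := bloch_posSemidef (sum_sq_tetrahedron x)
  refine ⟨fun x => bloch (tetrahedron x), hρ, fun x => trace_bloch _, ?_⟩
  refine sum_PF_mul_of_eqOn_Bal fun f hf => ?_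
  obtain ⟨u, hu, hΔ⟩ := exists_sub_eq_smul_pauli f hf
  have hu' : ∑ k, (-u) k ^ 2 = 1 := by simpa using hu
  rw [← bloch_sub_bloch_neg] at hΔ
  rw [dQuant_eq_of_sub_eq_smul (fun _ => by norm_num) hρ (bloch_posSemidef hu)
    (bloch_posSemidef hu') (bloch_add_bloch_neg u) (bloch_mul_bloch_neg hu) (by positivity) hΔ]
  push_cast
  ring
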